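/- arXiv:1910.02177 — 2 statements merged into one kernel-verified Lean document; each statement's English description precedes it below -/
import Mathlib

section
/- Let m = ({ρ_i}_{i∈I}, {𝓜_j}_{j∈J}, {E_k}_{k∈K}) and m' = ({ρ'_i}, {𝓜'_j}, {E'_k}) be distribution-equivalent physical representations on d×d complex matrices with the same index types, and suppose both m and m' are complete. Then m and m' are related by a similarity transformation: there exists an invertible linear map T on d×d complex matrices such that ρ'_i = T⁻¹(ρ_i) for all i ∈ I, 𝓜'_j = T⁻¹∘𝓜_j∘T for all j ∈ J, and E'_k = T*(E_k) for all k ∈ K, where T* is the dual map for the trace pairing, Tr[T*(A)B] = Tr[A T(B)]. -/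
open Matrix
open scoped ComplexOrder

noncomputable section

/-- d×d complex matrices. -/
abbrev Mat (d : ℕ) := Matrix (Fin d) (Fin d) ℂ

/-- The Choi matrix `Σ_{a,b} |a⟩⟨b| ⊗ 𝓜(|a⟩⟨b|)` of a linear map on matrices. -/
def choi {d : ℕ} (M : Mat d →ₗ[ℂ] Mat d) : Matrix (Fin d × Fin d) (Fin d × Fin d) ℂ :=
  ∑ a : Fin d, ∑ b : Fin d,
    kroneckerMap (· * ·) (single a b (1 : ℂ)) (M (single a b (1 : ℂ)))

/-- A representation: families of initial states, evolution maps and measurement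
operators. -/
structure QRep (d : ℕ) (I J K : Type) where
  ρ : I → Mat d
  M : J → Mat d →ₗ[ℂ] Mat d
  E : K → Mat d

/-- A representation is physical if the states are positive semidefinite Hermitian with
trace one, the maps are completely positive (positive semidefinite Choi matrix) and
trace-preserving, and the measurement operators `E` are Hermitian with `0 ≤ E ≤ 1`. -/
def QRep.Physical {d : ℕ} {I J K : Type} (m : QRep d I J K) : Prop :=
  (∀ i, (m.ρ i).PosSemidef ∧ (m.ρ i).trace = 1) ∧
  (∀ j, (choi (m.M j)).PosSemidef ∧ ∀ A, (m.M j A).trace = A.trace) ∧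
  (∀ k, (m.E k).PosSemidef ∧ ((1 : Mat d) - m.E k).PosSemidef)

/-- The probability `p_m(i, j_1, …, j_N, k) = Tr[E_k 𝓜_{j_N}(⋯𝓜_{j_1}(ρ_i)⋯)]`. -/
def QRep.prob {d : ℕ} {I J K : Type} (m : QRep d I J K) (i : I) (js : List J) (k : K) : ℂ :=
  (m.E k * js.foldl (fun A j => m.M j A) (m.ρ i)).trace

/-- Two representations are distribution-equivalent if their probability distributions
coincide. -/
def DistEquiv {d : ℕ} {I J K : Type} (m m' : QRep d I J K) : Prop :=
  ∀ (i : I) (js : List J) (k : K), m.prob i js k = m'.prob i js k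

/-- The unitary (`anti = false`) or antiunitary (`anti = true`) transformation
`𝓢(A) = uAu†` resp. `𝓢(A) = uAᵀu†` associated with a unitary matrix `u`. -/
def Sfwd {d : ℕ} (u : Mat d) (anti : Bool) (A : Mat d) : Mat d :=
  if anti then u * Aᵀ * uᴴ else u * A * uᴴ

/-- The inverse of `Sfwd u anti`; for `𝓢 ∈ 𝕊` the dual map `𝓢*` for the trace pairing
coincides with `𝓢⁻¹`. -/
def Sinv {d : ℕ} (u : Mat d) (anti : Bool) (A : Mat d) : Mat d :=
  if anti then (uᴴ * A * u)ᵀ else uᴴ * A * u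

/-- `m' = 𝓢(m) = ({𝓢⁻¹(ρ_i)}, {𝓢⁻¹∘𝓜_j∘𝓢}, {𝓢*(E_k)})` for some unitary or
antiunitary transformation `𝓢 ∈ 𝕊`. -/
def RelatedByS {d : ℕ} {I J K : Type} (m m' : QRep d I J K) : Prop :=
  ∃ u ∈ Matrix.unitaryGroup (Fin d) ℂ, ∃ anti : Bool,
    (∀ i, m'.ρ i = Sinv u anti (m.ρ i)) ∧
    (∀ j A, m'.M j A = Sinv u anti (m.M j (Sfwd u anti A))) ∧
    (∀ k, m'.E k = Sinv u anti (m.E k))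

/-- A representation is trivial if all states are maximally mixed, all maps are unital
and all measurement operators are scalar multiples of the identity. -/
def QRep.Trivial {d : ℕ} {I J K : Type} (m : QRep d I J K) : Prop :=
  (∀ i, m.ρ i = ((d : ℂ))⁻¹ • (1 : Mat d)) ∧
  (∀ j, m.M j 1 = 1) ∧
  (∀ k, ∃ c : ℂ, m.E k = c • (1 : Mat d))

/-!
Completeness of the effects makes the pairing `X ↦ (Tr[E_k X])_k` injective, for `m` and for
`m'`. The probabilities for the empty gate sequence say that the two pairings agree on the
states; as the states of `m'` span, the image of the pairing of `m'` lies in that of `m`, so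
the pairing of `m'` is the pairing of `m` composed with a linear automorphism `T`, and
`T(ρ'_i) = ρ_i`. The probabilities for gate sequences of length one then give
`T ∘ 𝓜'_j = 𝓜_j ∘ T` on the spanning states `ρ'_i`. The dual `T*` is the adjoint of `T` for
the nondegenerate trace form `(A, B) ↦ Tr[AB]`.
-/

theorem LinearMap.exists_linearEquiv_comp_eq_of_range_le {K V W : Type*} [Field K]
    [AddCommGroup V] [Module K V] [FiniteDimensional K V] [AddCommGroup W] [Module K W]
    {f g : V →ₗ[K] W} (hf : Function.Injective f) (hg : Function.Injective g)
    (hgf : range g ≤ range f) : ∃ T : V ≃ₗ[K] V, f ∘ₗ T.toLinearMap = g := by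
  let T₀ : V →ₗ[K] V := (LinearEquiv.ofInjective f hf).symm.toLinearMap ∘ₗ
    g.codRestrict (range f) fun x => hgf (mem_range_self g x)
  have hT₀ : f ∘ₗ T₀ = g := by ext x; simp [T₀]
  have hT₀_inj : Function.Injective T₀ :=
    Function.Injective.of_comp (f := f) (by rw [← coe_comp, hT₀]; exact hg)
  exact ⟨LinearEquiv.ofInjectiveEndo T₀ hT₀_inj, hT₀⟩

namespace Matrix

variable {n R : Type*} [Fintype n] [DecidableEq n] [Field R]

def traceMulForm : LinearMap.BilinForm R (Matrix n n R) :=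
  (LinearMap.mul R (Matrix n n R)).compr₂ (traceLinearMap n R R)

@[simp]
theorem traceMulForm_apply (A B : Matrix n n R) : traceMulForm A B = (A * B).trace := rfl

theorem traceMulForm_nondegenerate :
    (traceMulForm : LinearMap.BilinForm R (Matrix n n R)).Nondegenerate :=
  ⟨fun A hA => (ext_iff_trace_mul_right (B := 0)).2 fun B => by simpa using hA B,
    fun B hB => (ext_iff_trace_mul_left (B := 0)).2 fun A => by simpa using hB A⟩

theorem exists_trace_mul_adjoint (T : Matrix n n R →ₗ[R] Matrix n n R) :
    ∃ Tdual : Matrix n n R →ₗ[R] Matrix n n R,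
      ∀ A B, (Tdual A * B).trace = (A * T B).trace :=
  ⟨traceMulForm.leftAdjointOfNondegenerate traceMulForm_nondegenerate T, fun A B =>
    traceMulForm.isAdjointPairLeftAdjointOfNondegenerate traceMulForm_nondegenerate T A B⟩

variable {ι : Type*}

def effectPairing (E : ι → Matrix n n R) : Matrix n n R →ₗ[R] ι → R :=
  LinearMap.pi fun k => traceMulForm (E k)

theorem effectPairing_injective {E : ι → Matrix n n R}
    (hE : Submodule.span R (Set.range E) = ⊤) : Function.Injective (effectPairing E) := by
  rw [← LinearMap.ker_eq_bot, LinearMap.ker_eq_bot']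
  intro X hX
  have hflip : traceMulForm.flip X = 0 :=
    LinearMap.ext_on_range hE fun k => congrFun hX k
  exact traceMulForm_nondegenerate.2 X fun A => LinearMap.congr_fun hflip A

end Matrix

namespace DistEquiv

variable {d : ℕ} {I J K : Type} {m m' : QRep d I J K}

theorem effectPairing_state (heq : DistEquiv m m') (i : I) :
    effectPairing m'.E (m'.ρ i) = effectPairing m.E (m.ρ i) :=
  funext fun k => (heq i [] k).symm

theorem effectPairing_evolution (heq : DistEquiv m m') (j : J) (i : I) :
    effectPairing m'.E (m'.M j (m'.ρ i)) = effectPairing m.E (m.M j (m.ρ i)) :=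
  funext fun k => (heq i [j] k).symm

theorem range_effectPairing_le (heq : DistEquiv m m')
    (hρ' : Submodule.span ℂ (Set.range m'.ρ) = ⊤) :
    LinearMap.range (effectPairing m'.E) ≤ LinearMap.range (effectPairing m.E) := by
  rw [LinearMap.range_eq_map, ← hρ', Submodule.map_span_le]
  rintro _ ⟨i, rfl⟩
  exact ⟨m.ρ i, (heq.effectPairing_state i).symm⟩

end DistEquiv

theorem distribution_equivalent_related_by_gauge_general {d : ℕ} {I J K : Type}
    (m m' : QRep d I J K)
    (heq : DistEquiv m m')
    (hE : Submodule.span ℂ (Set.range m.E) = ⊤)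
    (hρ' : Submodule.span ℂ (Set.range m'.ρ) = ⊤)
    (hE' : Submodule.span ℂ (Set.range m'.E) = ⊤) :
    ∃ T : Mat d ≃ₗ[ℂ] Mat d, ∃ Tdual : Mat d →ₗ[ℂ] Mat d,
      (∀ A B : Mat d, (Tdual A * B).trace = (A * T B).trace) ∧
      (∀ i, m'.ρ i = T.symm (m.ρ i)) ∧
      (∀ j A, m'.M j A = T.symm (m.M j (T A))) ∧
      (∀ k, m'.E k = Tdual (m.E k)) := by
  have hΦ := effectPairing_injective hE
  obtain ⟨T, hT⟩ := LinearMap.exists_linearEquiv_comp_eq_of_range_le hΦ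
    (effectPairing_injective hE') (heq.range_effectPairing_le hρ')
  have hΦT (X : Mat d) : effectPairing m.E (T X) = effectPairing m'.E X :=
    LinearMap.congr_fun hT X
  have hTρ (i : I) : T (m'.ρ i) = m.ρ i := hΦ <| by rw [hΦT, heq.effectPairing_state]
  have hTM (j : J) :
      effectPairing m.E ∘ₗ m.M j ∘ₗ T.toLinearMap = effectPairing m'.E ∘ₗ m'.M j :=
    LinearMap.ext_on_range hρ' fun i => by simp [hTρ, heq.effectPairing_evolution]
  obtain ⟨Tdual, hTdual⟩ := exists_trace_mul_adjoint T.toLinearMap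
  refine ⟨T, Tdual, hTdual, fun i => T.eq_symm_apply.2 (hTρ i),
    fun j A => T.eq_symm_apply.2 (hΦ ?_), fun k => ?_⟩
  · rw [hΦT]
    exact (LinearMap.congr_fun (hTM j) A).symm
  · refine ext_iff_trace_mul_right.2 fun B => ?_
    rw [hTdual]
    exact congrFun (hΦT B) k |>.symm

/-- Lemma A2 of the gate set tomography section: two
distribution-equivalent complete physical representations are related by a similarity
transformation: there is an invertible linear map `T` with `ρ'_i = T⁻¹(ρ_i)`,
`𝓜'_j = T⁻¹∘𝓜_j∘T` and `E'_k = T*(E_k)`, where `T*` is the dual of `T` for the trace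
pairing. -/
theorem distribution_equivalent_related_by_gauge {d : ℕ} (hd : 2 ≤ d) {I J K : Type}
    (m m' : QRep d I J K) (hm : m.Physical) (hm' : m'.Physical)
    (heq : DistEquiv m m')
    (hρ : Submodule.span ℂ (Set.range m.ρ) = ⊤)
    (hE : Submodule.span ℂ (Set.range m.E) = ⊤)
    (hρ' : Submodule.span ℂ (Set.range m'.ρ) = ⊤)
    (hE' : Submodule.span ℂ (Set.range m'.E) = ⊤) :
    ∃ T : Mat d ≃ₗ[ℂ] Mat d, ∃ Tdual : Mat d →ₗ[ℂ] Mat d,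
      (∀ A B : Mat d, (Tdual A * B).trace = (A * T B).trace) ∧
      (∀ i, m'.ρ i = T.symm (m.ρ i)) ∧
      (∀ j A, m'.M j A = T.symm (m.M j (T A))) ∧
      (∀ k, m'.E k = Tdual (m.E k)) :=
  distribution_equivalent_related_by_gauge_general m m' heq hE hρ' hE'
end
end

section
/- Let 𝓜 be a completely positive trace-preserving linear map on d×d complex matrices and let λ' be the minimum eigenvalue of its Choi matrix. If F is real with F ≥ 1 and F·λ' + (1−F)/d ≥ 0 (equivalently 1 ≤ F ≤ (1 − dλ')⁻¹ when dλ' < 1, and any F ≥ 1 when dλ' ≥ 1), then the map D_F∘𝓜∘D_{1/F} is completely positive and trace-preserving. -/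
open Matrix
open scoped ComplexOrder

noncomputable section

/-- The depolarising map `D_F(A) = F·A + (1−F)·(Tr(A)/d)·I`. -/
def DFmap (d : ℕ) (F : ℂ) : Mat d →ₗ[ℂ] Mat d :=
  F • LinearMap.id +
    ((1 - F) / d) • ((Matrix.traceLinearMap (Fin d) ℂ ℂ).smulRight (1 : Mat d))

/-!
Because `𝓜` preserves traces, `D_F ∘ 𝓜 ∘ D_{1/F} = 𝓜 + ((F - 1)/d) Tr(·) (𝓜(I) - I)`, whose Choi
matrix is `C + ((F - 1)/d) (I ⊗ (𝓜(I) - I))` with `C` the Choi matrix of `𝓜`. Now `C ≥ λ' I`, and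
`𝓜(I)` is the sum of the `d` diagonal blocks of `C`, so `𝓜(I) ≥ d λ' I`. Hence the Choi matrix is at
least `(λ' + (F - 1)(λ' - 1/d)) I = (F λ' + (1 - F)/d) I ≥ 0`.
-/

open scoped Kronecker

open scoped MatrixOrder in
theorem Matrix.IsHermitian.posSemidef_sub_smul_one {𝕜 n : Type*} [RCLike 𝕜] [Fintype n]
    [DecidableEq n] {A : Matrix n n 𝕜} (hA : A.IsHermitian) {r : ℝ}
    (h : ∀ i, r ≤ hA.eigenvalues i) : (A - r • 1).PosSemidef := by
  rw [← nonneg_iff_posSemidef, sub_nonneg, ← Algebra.algebraMap_eq_smul_one,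
    algebraMap_le_iff_le_spectrum hA.isSelfAdjoint, hA.spectrum_real_eq_range_eigenvalues]
  exact Set.forall_mem_range.2 h

section

variable {d : ℕ}

theorem choi_apply (M : Mat d →ₗ[ℂ] Mat d) (p q : Fin d × Fin d) :
    choi M p q = M (single p.1 q.1 1) p.2 q.2 := by
  obtain ⟨a, i⟩ := p
  obtain ⟨b, j⟩ := q
  simp [choi, Matrix.sum_apply, single, ite_and]

theorem choi_add (M N : Mat d →ₗ[ℂ] Mat d) : choi (M + N) = choi M + choi N := by
  ext p q
  simp [choi_apply]

theorem choi_smul (c : ℂ) (M : Mat d →ₗ[ℂ] Mat d) : choi (c • M) = c • choi M := by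
  ext p q
  simp [choi_apply]

theorem choi_traceLinearMap_smulRight (B : Mat d) :
    choi ((traceLinearMap (Fin d) ℂ ℂ).smulRight B) = 1 ⊗ₖ B := by
  ext ⟨a, i⟩ ⟨b, j⟩
  by_cases hab : a = b
  · subst hab; simp [choi_apply]
  · simp [choi_apply, trace_single_eq_of_ne _ _ _ hab, one_apply_ne hab]

theorem choi_sub_smul_one_submatrix_prodMk (M : Mat d →ₗ[ℂ] Mat d) (r : ℝ) (a : Fin d) :
    (choi M - r • 1).submatrix (Prod.mk a) (Prod.mk a) = M (single a a 1) - r • 1 := by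
  ext i j
  simp [choi_apply, one_apply]

theorem posSemidef_map_one_sub_smul_one {M : Mat d →ₗ[ℂ] Mat d} {r : ℝ}
    (h : (choi M - r • 1).PosSemidef) : (M 1 - (d * r) • 1).PosSemidef := by
  have hblocks : M 1 - (d * r) • 1 = ∑ a, (choi M - r • 1).submatrix (Prod.mk a) (Prod.mk a) := by
    rw [Fintype.sum_congr _ _ (choi_sub_smul_one_submatrix_prodMk M r), Finset.sum_sub_distrib,
      ← map_sum, sum_single_one, Finset.sum_const, Finset.card_univ, Fintype.card_fin,
      ← Nat.cast_smul_eq_nsmul ℝ, smul_smul]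
  rw [hblocks]
  exact posSemidef_sum _ fun a _ => h.submatrix _

theorem DFmap_apply (F : ℂ) (A : Mat d) : DFmap d F A = F • A + ((1 - F) / d * A.trace) • 1 := by
  simp [DFmap, smul_smul]

theorem trace_DFmap (hd : d ≠ 0) (F : ℂ) (A : Mat d) : (DFmap d F A).trace = A.trace := by
  rw [DFmap_apply]
  simp only [trace_add, trace_smul, smul_eq_mul, trace_one, Fintype.card_fin]
  field_simp
  ring

theorem DFmap_comp_comp_DFmap_inv (hd : d ≠ 0) {M : Mat d →ₗ[ℂ] Mat d}
    (hM : ∀ A, (M A).trace = A.trace) {F : ℂ} (hF : F ≠ 0) :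
    DFmap d F ∘ₗ M ∘ₗ DFmap d F⁻¹ =
      M + ((F - 1) / d) • (traceLinearMap (Fin d) ℂ ℂ).smulRight (M 1 - 1) := by
  ext1 A
  rw [LinearMap.comp_apply, DFmap_apply, LinearMap.comp_apply, hM, trace_DFmap hd, DFmap_apply]
  simp only [map_add, map_smul, LinearMap.add_apply, LinearMap.smul_apply,
    LinearMap.smulRight_apply, traceLinearMap_apply]
  match_scalars <;> field_simp; ring

theorem choi_DFmap_comp_comp_DFmap_inv (hd : d ≠ 0) {M : Mat d →ₗ[ℂ] Mat d}
    (hM : ∀ A, (M A).trace = A.trace) {F : ℝ} (hF : F ≠ 0) (r : ℝ) :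
    choi (DFmap d F ∘ₗ M ∘ₗ DFmap d (F : ℂ)⁻¹) =
      (choi M - r • 1) + ((F - 1) / d) • (1 ⊗ₖ (M 1 - (d * r) • 1)) +
        (F * r + (1 - F) / d) • 1 := by
  have hsplit : M 1 - 1 = (M 1 - (d * r) • 1) + (d * r - 1) • 1 := by module
  rw [DFmap_comp_comp_DFmap_inv hd hM (Complex.ofReal_ne_zero.2 hF), choi_add, choi_smul,
    choi_traceLinearMap_smulRight, hsplit, kronecker_add, kronecker_smul, one_kronecker_one]
  match_scalars <;> simp only [Complex.coe_algebraMap]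
  field_simp
  ring

end

/-- for a completely positive trace-preserving map `𝓜` whose Choi matrix
has minimum eigenvalue `λ'`, and a real `F ≥ 1` with `F·λ' + (1−F)/d ≥ 0`, the map
`D_F∘𝓜∘D_{1/F}` is completely positive and trace-preserving. -/
theorem depolarised_conjugated_map_physical {d : ℕ} (hd : 1 ≤ d)
    (M : Mat d →ₗ[ℂ] Mat d)
    (hCP : (choi M).PosSemidef) (hTP : ∀ A, (M A).trace = A.trace)
    (lam : ℝ) (hlam : IsLeast (Set.range hCP.1.eigenvalues) lam)
    (F : ℝ) (hF1 : 1 ≤ F) (hF2 : 0 ≤ F * lam + (1 - F) / d) :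
    (choi (DFmap d (F : ℂ) ∘ₗ M ∘ₗ DFmap d ((F : ℂ)⁻¹))).PosSemidef ∧
    (∀ A, ((DFmap d (F : ℂ) ∘ₗ M ∘ₗ DFmap d ((F : ℂ)⁻¹)) A).trace = A.trace) := by
  have hd0 : d ≠ 0 := by omega
  refine ⟨?_, fun A => by simp only [LinearMap.comp_apply, trace_DFmap hd0, hTP]⟩
  have hchoi : (choi M - lam • 1).PosSemidef :=
    hCP.1.posSemidef_sub_smul_one fun i => hlam.2 ⟨i, rfl⟩
  have hcoeff : 0 ≤ (F - 1) / d := div_nonneg (sub_nonneg.2 hF1) d.cast_nonneg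
  rw [choi_DFmap_comp_comp_DFmap_inv hd0 hTP (zero_lt_one.trans_le hF1).ne' lam]
  exact (hchoi.add ((PosSemidef.one.kronecker (posSemidef_map_one_sub_smul_one hchoi)).smul
    hcoeff)).add (PosSemidef.one.smul hF2)
end
end
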